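/- arXiv:1509.01601 — 6 statements merged into one kernel-verified Lean document; each statement's English description precedes it below -/
import Mathlib

section
/- Let K be a compact Hausdorff space and p ∈ K such that K \ {p} is countably tight, p is not isolated, and p is not in the closure of any countable discrete subset of K. Then the pseudocharacter of p in K is uncountable; in particular, for every countable family {U_n : n < ω} of open neighborhoods of p there is a point x ≠ p with x ∈ ⋂_n U_n. -/
open Set Topology

/-- A subset `D` is discrete if each of its points has an open neighborhood
meeting `D` only in that point. -/
def IsDiscreteSubset {X : Type*} [TopologicalSpace X] (D : Set X) : Prop :=
  ∀ x ∈ D, ∃ U : Set X, IsOpen U ∧ x ∈ U ∧ U ∩ D = {x}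

/-- A space is countably tight if every point in the closure of a set is in the
closure of a countable subset of it. -/
def CountablyTight (X : Type*) [TopologicalSpace X] : Prop :=
  ∀ (A : Set X) (x : X), x ∈ closure A → ∃ C ⊆ A, C.Countable ∧ x ∈ closure C

/-- The pseudocharacter of a point: the least cardinality of a family of open
neighborhoods of the point whose intersection is exactly that singleton. -/
noncomputable def pseudoChar {X : Type*} [TopologicalSpace X] (x : X) : Cardinal :=
  sInf { c | ∃ B : Set (Set X), Cardinal.mk B = c ∧ (∀ U ∈ B, IsOpen U ∧ x ∈ U) ∧
    ⋂₀ B = {x} }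

/-!
Both claims say that `{p}` is not a Gδ. If it were, closed neighbourhoods `Vₙ` of `p` with
`⋂ Vₙ = {p}` would, by compactness, form a countable neighbourhood base at `p`. As `p` is not
isolated, some sequence of points `xₙ ≠ p` would then converge to `p`, and in a Hausdorff
space the range of such a sequence is discrete: a countable discrete set with `p` in its closure.
-/

open Filter

theorem isCountablyGenerated_nhds_of_isGδ_singleton {X : Type*} [TopologicalSpace X]
    [CompactSpace X] [RegularSpace X] {p : X} (hp : IsGδ ({p} : Set X)) :
    (𝓝 p).IsCountablyGenerated := by
  obtain ⟨U, hUo, hpU⟩ := hp.eq_iInter_nat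
  have hpUn : ∀ n, p ∈ U n := fun n => mem_iInter.1 (hpU ▸ mem_singleton p) n
  choose V hV hVU using fun n => (closed_nhds_basis p).mem_iff.1 ((hUo n).mem_nhds (hpUn n))
  have : 𝓝 p = ⨅ n, 𝓟 (V n) := by
    refine le_antisymm (le_iInf fun n => le_principal_iff.2 (hV n).1)
      (le_nhds_of_unique_clusterPt fun x hx => ?_)
    have hxV : ∀ n, x ∈ V n := fun n =>
      (hV n).2.closure_eq ▸ (hx.mono (iInf_le _ n)).mem_closure
    simpa [← hpU] using mem_iInter.2 fun n => hVU n (hxV n)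
  rw [this]
  infer_instance

theorem exists_seq_ne_tendsto_nhds {X : Type*} [TopologicalSpace X] {p : X}
    [(𝓝 p).IsCountablyGenerated] [(𝓝[≠] p).NeBot] :
    ∃ x : ℕ → X, (∀ n, x n ≠ p) ∧ Tendsto x atTop (𝓝 p) := by
  obtain ⟨x, hx⟩ := exists_seq_tendsto (𝓝[≠] p)
  obtain ⟨hxp, hne⟩ := tendsto_nhdsWithin_iff.1 hx
  obtain ⟨N, hN⟩ := eventually_atTop.1 hne
  exact ⟨fun n => x (n + N), fun n => hN _ (Nat.le_add_left N n),
    (tendsto_add_atTop_iff_nat N).2 hxp⟩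

theorem isDiscreteSubset_range_of_tendsto {X : Type*} [TopologicalSpace X] [T2Space X]
    {x : ℕ → X} {p : X} (hx : Tendsto x atTop (𝓝 p)) (hne : ∀ n, x n ≠ p) :
    IsDiscreteSubset (range x) := by
  rintro _ ⟨m, rfl⟩
  obtain ⟨V, W, hV, hW, hmV, hpW, hVW⟩ := t2_separation (hne m)
  obtain ⟨N, hN⟩ := eventually_atTop.1 (hx (hW.mem_nhds hpW))
  -- only the finitely many terms before `N` can enter `V`
  set S : Set X := x '' Iio N \ {x m}
  have hS : S.Finite := ((finite_Iio N).image x).sdiff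
  refine ⟨V \ S, hV.sdiff hS.isClosed, ⟨hmV, fun h => h.2 rfl⟩, ?_⟩
  refine Subset.antisymm ?_ (singleton_subset_iff.2 ⟨⟨hmV, fun h => h.2 rfl⟩, m, rfl⟩)
  rintro _ ⟨⟨hkV, hkS⟩, k, rfl⟩
  by_cases hk : k < N
  · by_contra hkm
    exact hkS ⟨⟨k, hk, rfl⟩, hkm⟩
  · exact absurd (hN k (not_lt.1 hk)) (disjoint_left.1 hVW hkV)

theorem not_isGδ_singleton_of_forall_notMem_closure {K : Type*} [TopologicalSpace K]
    [CompactSpace K] [T2Space K] {p : K} (hiso : ¬ IsOpen ({p} : Set K))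
    (hnd : ∀ D : Set K, D.Countable → IsDiscreteSubset D → p ∉ closure D) :
    ¬ IsGδ ({p} : Set K) := by
  intro hp
  have := isCountablyGenerated_nhds_of_isGδ_singleton hp
  have : (𝓝[≠] p).NeBot :=
    mem_closure_iff_nhdsWithin_neBot.1 (dense_compl_singleton_iff_not_open.2 hiso p)
  obtain ⟨x, hne, hx⟩ := exists_seq_ne_tendsto_nhds (p := p)
  exact hnd _ (countable_range x) (isDiscreteSubset_range_of_tendsto hx hne)
    (mem_closure_of_tendsto hx (Eventually.of_forall mem_range_self))

theorem sInter_setOf_isOpen_mem {X : Type*} [TopologicalSpace X] [T1Space X] (p : X) :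
    ⋂₀ {U : Set X | IsOpen U ∧ p ∈ U} = {p} := by
  refine Subset.antisymm (fun y hy => ?_) fun y hy => ?_
  · by_contra hyp
    exact hy {y}ᶜ ⟨isOpen_compl_singleton, Ne.symm hyp⟩ rfl
  · rw [mem_singleton_iff.1 hy]
    exact fun U hU => hU.2

theorem aleph0_lt_pseudoChar {X : Type*} [TopologicalSpace X] [T1Space X] {p : X}
    (hp : ¬ IsGδ ({p} : Set X)) : Cardinal.aleph0 < pseudoChar p := by
  obtain ⟨B, hcard, hB, hBp⟩ := csInf_mem (s := { c | ∃ B : Set (Set X), Cardinal.mk B = c ∧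
      (∀ U ∈ B, IsOpen U ∧ p ∈ U) ∧ ⋂₀ B = {p} })
    ⟨_, _, rfl, fun _ hU => hU, sInter_setOf_isOpen_mem p⟩
  rw [pseudoChar, ← hcard, ← not_le, Cardinal.mk_le_aleph0_iff, countable_coe_iff]
  exact fun hB' => hp ⟨B, fun U hU => (hB U hU).1, hB', hBp.symm⟩

theorem exists_ne_forall_mem_of_not_isGδ_singleton {X : Type*} [TopologicalSpace X] {p : X}
    (hp : ¬ IsGδ ({p} : Set X)) (U : ℕ → Set X) (hU : ∀ n, IsOpen (U n) ∧ p ∈ U n) :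
    ∃ x : X, x ≠ p ∧ ∀ n, x ∈ U n := by
  by_contra! h
  have hUp : ⋂ n, U n = {p} :=
    Subset.antisymm
      (fun y hy => by_contra fun hyp => (h y hyp).elim fun n hn => hn (mem_iInter.1 hy n))
      (singleton_subset_iff.2 (mem_iInter.2 fun n => (hU n).2))
  exact hp (hUp ▸ IsGδ.iInter_of_isOpen fun n => (hU n).1)

theorem statement0_general {K : Type} [TopologicalSpace K] [CompactSpace K] [T2Space K] (p : K)
    (hiso : ¬ IsOpen ({p} : Set K))
    (hnd : ∀ D : Set K, D.Countable → IsDiscreteSubset D → p ∉ closure D) :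
    Cardinal.aleph0 < pseudoChar p ∧
      ∀ U : ℕ → Set K, (∀ n, IsOpen (U n) ∧ p ∈ U n) →
        ∃ x : K, x ≠ p ∧ ∀ n, x ∈ U n := by
  have hp := not_isGδ_singleton_of_forall_notMem_closure hiso hnd
  exact ⟨aleph0_lt_pseudoChar hp, exists_ne_forall_mem_of_not_isGδ_singleton hp⟩

/-- If `K` is compact Hausdorff, `p ∈ K`, `K \ {p}` is countably tight, `p` is not
isolated, and `p` is not in the closure of any countable discrete subset of `K`, then
the pseudocharacter of `p` is uncountable; in particular every countable family of open
neighborhoods of `p` has a point other than `p` in its intersection. -/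
theorem statement0 {K : Type} [TopologicalSpace K] [CompactSpace K] [T2Space K] (p : K)
    (hct : CountablyTight ↥({p}ᶜ : Set K))
    (hiso : ¬ IsOpen ({p} : Set K))
    (hnd : ∀ D : Set K, D.Countable → IsDiscreteSubset D → p ∉ closure D) :
    Cardinal.aleph0 < pseudoChar p ∧
      ∀ U : ℕ → Set K, (∀ n, IsOpen (U n) ∧ p ∈ U n) →
        ∃ x : K, x ≠ p ∧ ∀ n, x ∈ U n :=
  statement0_general p hiso hnd
end

section
/- Let K be a compact Hausdorff space and p ∈ K such that K \ {p} is countably tight, p is not isolated, and p is not in the closure of any countable discrete subset of K. Then there is a free ω₁-sequence {x_α : α < ω₁} in K whose only complete accumulation point is p. -/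
open Set Topology

lemma aux_nbhds {K : Type} [TopologicalSpace K] [CompactSpace K] [T2Space K] (p : K)
    (hiso : ¬ IsOpen ({p} : Set K))
    (hnd : ∀ D : Set K, D.Countable → IsDiscreteSubset D → p ∉ closure D)
    (g : ℕ → Set K) (hgc : ∀ n, IsClosed (g n)) (hgn : ∀ n, g n ∈ 𝓝 p)
    (hgi : (⋂ n, g n) ⊆ {p}) : False := by
  classical
  set B : ℕ → Set K := fun n => ⋂ i ∈ Set.Iic n, g i with hB
  have hBc : ∀ n, IsClosed (B n) := fun n => isClosed_biInter fun i _ => hgc i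
  have hBn : ∀ n, B n ∈ 𝓝 p := fun n =>
    (Filter.biInter_mem (Set.finite_Iic n)).2 fun i _ => hgn i
  have hBanti : ∀ m n, m ≤ n → B n ⊆ B m := fun m n h =>
    Set.biInter_subset_biInter_left (Set.Iic_subset_Iic.2 h)
  have hBg : ∀ n, B n ⊆ g n := fun n =>
    Set.biInter_subset_of_mem (Set.mem_Iic.2 le_rfl)
  have hBi : (⋂ n, B n) ⊆ {p} := fun z hz =>
    hgi (Set.mem_iInter.2 fun n => hBg n (Set.mem_iInter.1 hz n))
  -- the B n form a neighborhood basis at p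
  have key : ∀ O : Set K, IsOpen O → p ∈ O → ∃ n, B n ⊆ O := by
    intro O hO hpO
    by_contra h
    push_neg at h
    have hne : ∀ n, (B n ∩ Oᶜ).Nonempty := by
      intro n
      obtain ⟨z, hz⟩ := Set.not_subset.1 (h n)
      exact ⟨z, hz.1, hz.2⟩
    have hdir : Directed (· ⊇ ·) (fun n => B n ∩ Oᶜ) := by
      intro m n
      rcases le_total m n with h' | h'
      · exact ⟨n, Set.inter_subset_inter_left _ (hBanti m n h'), subset_rfl⟩
      · exact ⟨m, subset_rfl, Set.inter_subset_inter_left _ (hBanti n m h')⟩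
    have hcl : ∀ n, IsClosed (B n ∩ Oᶜ) := fun n => (hBc n).inter hO.isClosed_compl
    obtain ⟨z, hz⟩ := IsCompact.nonempty_iInter_of_directed_nonempty_isCompact_isClosed
      (fun n => B n ∩ Oᶜ) hdir hne (fun n => (hcl n).isCompact) hcl
    have hzB : z ∈ ⋂ n, B n := Set.mem_iInter.2 fun n => (Set.mem_iInter.1 hz n).1
    have : z = p := hBi hzB
    exact (Set.mem_iInter.1 hz 0).2 (this ▸ hpO)
  -- step existence
  have hstep : ∀ (n : ℕ) (W : {W : Set K // IsOpen W ∧ p ∈ W}),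
      ∃ y : K × Set K × {W : Set K // IsOpen W ∧ p ∈ W},
        y.1 ∈ W.1 ∧ y.1 ≠ p ∧ IsOpen y.2.1 ∧ y.1 ∈ y.2.1 ∧
        closure y.2.1 ⊆ W.1 \ {p} ∧
        y.2.2.1 = (W.1 ∩ interior (B n)) \ closure y.2.1 := by
    rintro n ⟨W, hWo, hWp⟩
    have hWne : ∃ d ∈ W, d ≠ p := by
      by_contra h
      push_neg at h
      have : W = {p} := Set.eq_singleton_iff_unique_mem.2 ⟨hWp, h⟩
      exact hiso (this ▸ hWo)
    obtain ⟨d, hdW, hdp⟩ := hWne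
    have hWd : W \ {p} ∈ 𝓝 d := by
      have : IsOpen (W \ {p}) := hWo.sdiff isClosed_singleton
      exact this.mem_nhds ⟨hdW, hdp⟩
    obtain ⟨N, ⟨hNn, hNc⟩, hNs⟩ := (closed_nhds_basis d).mem_iff.1 hWd
    refine ⟨⟨d, interior N, ⟨(W ∩ interior (B n)) \ closure (interior N), ?_, ?_⟩⟩,
      hdW, hdp, isOpen_interior, mem_interior_iff_mem_nhds.2 hNn, ?_, rfl⟩
    · exact ((hWo.inter isOpen_interior).sdiff isClosed_closure)
    · have hGc : closure (interior N) ⊆ W \ {p} :=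
        (closure_minimal interior_subset hNc).trans hNs
      refine ⟨⟨hWp, mem_interior_iff_mem_nhds.2 (hBn n)⟩, fun hpc => ?_⟩
      exact (hGc hpc).2 rfl
    · exact (closure_minimal interior_subset hNc).trans hNs
  choose F hF using hstep
  set seq : ℕ → {W : Set K // IsOpen W ∧ p ∈ W} := fun n =>
    Nat.rec ⟨Set.univ, isOpen_univ, Set.mem_univ p⟩ (fun m Wm => (F m Wm).2.2) n with hseq
  set d : ℕ → K := fun n => (F n (seq n)).1 with hd
  set G : ℕ → Set K := fun n => (F n (seq n)).2.1 with hG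
  have hrec : ∀ n, seq (n + 1) = (F n (seq n)).2.2 := fun n => rfl
  have hprops : ∀ n, d n ∈ (seq n).1 ∧ d n ≠ p ∧ IsOpen (G n) ∧ d n ∈ G n ∧
      closure (G n) ⊆ (seq n).1 \ {p} ∧
      (seq (n+1)).1 = ((seq n).1 ∩ interior (B n)) \ closure (G n) := by
    intro n
    have := hF n (seq n)
    rw [← hrec n] at this
    exact this
  have hsub : ∀ m n, m ≤ n → (seq n).1 ⊆ (seq m).1 := by
    intro m n h
    induction n with
    | zero => simp_all
    | succ k ih =>
      rcases Nat.lt_or_ge m (k+1) with h' | h'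
      · refine subset_trans ?_ (ih (Nat.lt_succ_iff.1 h'))
        rw [(hprops k).2.2.2.2.2]
        exact fun z hz => hz.1.1
      · have : m = k + 1 := le_antisymm h h'
        subst this; exact subset_rfl
  set D : Set K := Set.range d with hD
  have hdisc : IsDiscreteSubset D := by
    rintro z ⟨n, rfl⟩
    refine ⟨G n, (hprops n).2.2.1, (hprops n).2.2.2.1, ?_⟩
    apply Set.eq_singleton_iff_unique_mem.2
    refine ⟨⟨(hprops n).2.2.2.1, ⟨n, rfl⟩⟩, ?_⟩
    rintro z ⟨hzG, m, rfl⟩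
    rcases lt_trichotomy m n with h | h | h
    · exfalso
      have h1 : G n ⊆ (seq n).1 := fun w hw =>
        ((hprops n).2.2.2.2.1 (subset_closure hw)).1
      have h2 : (seq n).1 ⊆ (seq (m+1)).1 := hsub (m+1) n h
      have h3 : d m ∈ (seq (m+1)).1 := h2 (h1 hzG)
      rw [(hprops m).2.2.2.2.2] at h3
      exact h3.2 (subset_closure (hprops m).2.2.2.1)
    · rw [h]
    · exfalso
      have h1 : d m ∈ (seq m).1 := (hprops m).1
      have h2 : (seq m).1 ⊆ (seq (n+1)).1 := hsub (n+1) m h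
      have h3 := h2 h1
      rw [(hprops n).2.2.2.2.2] at h3
      exact h3.2 (subset_closure hzG)
  have hclo : p ∈ closure D := by
    rw [mem_closure_iff]
    intro O hO hpO
    obtain ⟨n, hn⟩ := key O hO hpO
    refine ⟨d (n+1), ?_, ⟨n+1, rfl⟩⟩
    have h1 : d (n+1) ∈ (seq (n+1)).1 := (hprops (n+1)).1
    rw [(hprops n).2.2.2.2.2] at h1
    exact hn (interior_subset h1.1.2)
  exact hnd D (Set.countable_range d) hdisc hclo

noncomputable section

universe u

abbrev Idx : Type (u + 1) := {o : Ordinal.{u} // o < (Cardinal.aleph 1).ord}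

lemma countable_initialSeg (a : Idx.{u}) : {b : Idx.{u} | b.1 < a.1}.Countable := by
  have h1 : Cardinal.mk {b : Idx.{u} // b.1 < a.1} ≤ Cardinal.aleph0 := by
    have e : {b : Idx.{u} // b.1 < a.1} ≃ ↥(Set.Iio a.1) :=
      ⟨fun b => ⟨b.1.1, b.2⟩, fun o => ⟨⟨o.1, lt_trans o.2 a.2⟩, o.2⟩,
        fun b => by apply Subtype.ext; apply Subtype.ext; rfl,
        fun o => by apply Subtype.ext; rfl⟩
    rw [Cardinal.mk_congr e, Ordinal.mk_Iio_ordinal]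
    have h2 : a.1.card ≤ Cardinal.aleph0 := by
      have hc : a.1.card < Cardinal.aleph 1 := Cardinal.lt_ord.1 a.2
      revert hc
      generalize a.1.card = c
      intro hc
      rw [← Cardinal.succ_aleph0] at hc
      exact Order.lt_succ_iff.1 hc
    calc Cardinal.lift.{u + 1} a.1.card ≤ Cardinal.lift.{u + 1} Cardinal.aleph0 :=
          Cardinal.lift_le.2 h2
      _ = Cardinal.aleph0 := Cardinal.lift_aleph0
  have : Countable {b : Idx.{u} // b.1 < a.1} := Cardinal.mk_le_aleph0_iff.1 h1
  exact Set.countable_coe_iff.1 this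

variable {K : Type} [TopologicalSpace K]

def GoodP (p : K) (a : Idx.{u}) (prev : ∀ b : Idx.{u}, b.1 < a.1 → K × Set K)
    (y : K × Set K) : Prop :=
  IsOpen y.2 ∧ p ∈ y.2 ∧ y.1 ∈ y.2 ∧ y.1 ≠ p ∧
  (∀ (b : Idx.{u}) (hb : b.1 < a.1), y.1 ∈ closure (prev b hb).2) ∧
  closure y.2 ∩ closure {z | ∃ (b : Idx.{u}) (hb : b.1 < a.1), (prev b hb).1 = z} = ∅

def idxWf : WellFounded (fun a b : Idx.{u} => a.1 < b.1) :=
  InvImage.wf Subtype.val Ordinal.lt_wf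

def stepF (p : K) (a : Idx.{u}) (prev : ∀ b : Idx.{u}, b.1 < a.1 → K × Set K) : K × Set K :=
  letI := Classical.propDecidable (∃ y, GoodP p a prev y)
  if h : ∃ y, GoodP p a prev y then h.choose else (p, Set.univ)

def seqF (p : K) : Idx.{u} → K × Set K :=
  idxWf.fix (C := fun _ => K × Set K) (stepF p)

theorem seqF_eq (p : K) (a : Idx.{u}) :
    seqF p a = stepF p a (fun b _ => seqF p b) :=
  idxWf.fix_eq (stepF p) a

variable [CompactSpace K] [T2Space K]

theorem exists_good (p : K) (hiso : ¬ IsOpen ({p} : Set K))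
    (hnd : ∀ D : Set K, D.Countable → IsDiscreteSubset D → p ∉ closure D)
    (a : Idx.{u})
    (IH : ∀ b : Idx.{u}, b.1 < a.1 → GoodP p b (fun c _ => seqF p c) (seqF p b)) :
    ∃ y, GoodP p a (fun b _ => seqF p b) y := by
  classical
  set C : Set K := {z | ∃ (b : Idx.{u}) (hb : b.1 < a.1), (seqF p b).1 = z} with hC
  have hCim : C = (fun b : Idx.{u} => (seqF p b).1) '' {b : Idx.{u} | b.1 < a.1} := by
    ext z
    simp only [hC, Set.mem_setOf_eq, Set.mem_image]
    constructor
    · rintro ⟨b, hb, rfl⟩; exact ⟨b, hb, rfl⟩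
    · rintro ⟨b, hb, rfl⟩; exact ⟨b, hb, rfl⟩
  have hCc : C.Countable := by
    rw [hCim]; exact (countable_initialSeg a).image _
  have hCd : IsDiscreteSubset C := by
    rintro z ⟨b, hb, rfl⟩
    obtain ⟨hVo, hpV, hxV, hxp, hmem, hfree⟩ := IH b hb
    by_cases hcase : ∃ c : Idx.{u}, b.1 < c.1 ∧ c.1 < a.1
    · obtain ⟨c, hbc, hca⟩ := hcase
      have hb'lt : Order.succ b.1 < (Cardinal.aleph 1).ord :=
        lt_trans (lt_of_le_of_lt (Order.succ_le_of_lt hbc) hca) a.2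
      set b' : Idx.{u} := ⟨Order.succ b.1, hb'lt⟩ with hb'
      have hb'a : b'.1 < a.1 := lt_of_le_of_lt (Order.succ_le_of_lt hbc) hca
      obtain ⟨hVo', hpV', hxV', hxp', hmem', hfree'⟩ := IH b' hb'a
      have hnotcl : (seqF p b).1 ∉ closure (seqF p b').2 := by
        intro hxcl
        have hxC : (seqF p b).1 ∈
            closure {z | ∃ (e : Idx.{u}) (he : e.1 < b'.1), (seqF p e).1 = z} :=
          subset_closure ⟨b, Order.lt_succ b.1, rfl⟩
        exact Set.notMem_empty _ (hfree' ▸ Set.mem_inter hxcl hxC)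
      refine ⟨(seqF p b).2 ∩ (closure (seqF p b').2)ᶜ,
        hVo.inter (isOpen_compl_iff.2 isClosed_closure), ⟨hxV, hnotcl⟩, ?_⟩
      apply Set.eq_singleton_iff_unique_mem.2
      refine ⟨⟨⟨hxV, hnotcl⟩, ⟨b, hb, rfl⟩⟩, ?_⟩
      rintro z ⟨⟨hzV, hzcl⟩, e, hea, rfl⟩
      rcases lt_trichotomy e.1 b.1 with h | h | h
      · exfalso
        have h1 : (seqF p e).1 ∈
            closure {z | ∃ (f : Idx.{u}) (hf : f.1 < b.1), (seqF p f).1 = z} :=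
          subset_closure ⟨e, h, rfl⟩
        exact Set.notMem_empty _ (hfree ▸ Set.mem_inter (subset_closure hzV) h1)
      · exact congrArg (fun w => (seqF p w).1) (Subtype.ext h)
      · exfalso
        rcases eq_or_lt_of_le (Order.succ_le_of_lt h) with h' | h'
        · apply hzcl
          have : e = b' := Subtype.ext h'.symm
          rw [this]
          exact subset_closure hxV'
        · exact hzcl ((IH e hea).2.2.2.2.1 b' h')
    · refine ⟨(seqF p b).2, hVo, hxV, ?_⟩
      apply Set.eq_singleton_iff_unique_mem.2
      refine ⟨⟨hxV, ⟨b, hb, rfl⟩⟩, ?_⟩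
      rintro z ⟨hzV, e, hea, rfl⟩
      rcases lt_trichotomy e.1 b.1 with h | h | h
      · exfalso
        have h1 : (seqF p e).1 ∈
            closure {z | ∃ (f : Idx.{u}) (hf : f.1 < b.1), (seqF p f).1 = z} :=
          subset_closure ⟨e, h, rfl⟩
        exact Set.notMem_empty _ (hfree ▸ Set.mem_inter (subset_closure hzV) h1)
      · exact congrArg (fun w => (seqF p w).1) (Subtype.ext h)
      · exact absurd ⟨e, h, hea⟩ hcase
  have hpC : p ∉ closure C := hnd C hCc hCd
  have hVnb : (closure C)ᶜ ∈ 𝓝 p := (isClosed_closure (s := C)).isOpen_compl.mem_nhds hpC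
  obtain ⟨N, ⟨hNn, hNc⟩, hNs⟩ := (closed_nhds_basis p).mem_iff.1 hVnb
  have hVno : IsOpen (interior N) := isOpen_interior
  have hpVn : p ∈ interior N := mem_interior_iff_mem_nhds.2 hNn
  have hVncl : closure (interior N) ∩ closure C = ∅ := by
    apply Set.eq_empty_iff_forall_notMem.2
    rintro z ⟨hz1, hz2⟩
    exact hNs ((closure_minimal interior_subset hNc) hz1) hz2
  have hex : ∃ z, (∀ (b : Idx.{u}) (hb : b.1 < a.1), z ∈ closure (seqF p b).2) ∧
      z ∈ interior N ∧ z ≠ p := by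
    by_contra h
    push_neg at h
    obtain ⟨N2, ⟨hN2n, hN2c⟩, hN2s⟩ := (closed_nhds_basis p).mem_iff.1 (hVno.mem_nhds hpVn)
    set G : Set (Set K) := insert N2 ((fun b : Idx.{u} => closure (seqF p b).2) ''
      {b : Idx.{u} | b.1 < a.1}) with hG
    have hGc : G.Countable := (((countable_initialSeg a)).image _).insert N2
    obtain ⟨g, hg⟩ := hGc.exists_eq_range ⟨N2, Set.mem_insert _ _⟩
    have hmemG : ∀ n, g n ∈ G := fun n => hg ▸ ⟨n, rfl⟩
    apply aux_nbhds p hiso hnd g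
    · intro n
      rcases hmemG n with h' | ⟨b, _, h'⟩
      · rw [h']; exact hN2c
      · rw [← h']; exact isClosed_closure
    · intro n
      rcases hmemG n with h' | ⟨b, hb, h'⟩
      · rw [h']; exact hN2n
      · rw [← h']
        exact Filter.mem_of_superset (((IH b hb).1).mem_nhds (IH b hb).2.1) subset_closure
    · intro z hz
      have hzall : ∀ s ∈ G, z ∈ s := by
        intro s hs
        rw [hg] at hs
        obtain ⟨n, rfl⟩ := hs
        exact Set.mem_iInter.1 hz n
      have hz2 : z ∈ interior N := hN2s (hzall N2 (Set.mem_insert _ _))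
      have hz1 : ∀ (b : Idx.{u}) (hb : b.1 < a.1), z ∈ closure (seqF p b).2 := by
        intro b hb
        exact hzall _ (Set.mem_insert_iff.2 (Or.inr ⟨b, hb, rfl⟩))
      exact h z hz1 hz2
  obtain ⟨z, hz1, hz2, hz3⟩ := hex
  refine ⟨(z, interior N), ?_⟩
  exact ⟨hVno, hpVn, hz2, hz3, hz1, hVncl⟩

theorem good_all (p : K) (hiso : ¬ IsOpen ({p} : Set K))
    (hnd : ∀ D : Set K, D.Countable → IsDiscreteSubset D → p ∉ closure D) :
    ∀ a : Idx.{u}, GoodP p a (fun b _ => seqF p b) (seqF p a) := by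
  refine fun a => idxWf.induction (C := fun a => GoodP p a (fun b _ => seqF p b) (seqF p a)) a ?_
  intro a IH
  have hex := exists_good p hiso hnd a IH
  rw [seqF_eq]
  unfold stepF
  rw [dif_pos hex]
  exact hex.choose_spec


theorem free_at (p : K) (hiso : ¬ IsOpen ({p} : Set K))
    (hnd : ∀ D : Set K, D.Countable → IsDiscreteSubset D → p ∉ closure D) (b : Idx.{u}) :
    closure ((fun a : Idx.{u} => (seqF p a).1) '' {a : Idx.{u} | a.1 < b.1}) ∩
      closure ((fun a : Idx.{u} => (seqF p a).1) '' {a : Idx.{u} | b.1 ≤ a.1}) = ∅ := by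
  obtain ⟨hVo, hpV, hxV, hxp, hmem, hfree⟩ := good_all p hiso hnd b
  have h1 : (fun a : Idx.{u} => (seqF p a).1) '' {a : Idx.{u} | a.1 < b.1} =
      {z | ∃ (a : Idx.{u}) (ha : a.1 < b.1), (seqF p a).1 = z} := by
    ext z
    simp only [Set.mem_image, Set.mem_setOf_eq]
    constructor
    · rintro ⟨a, ha, rfl⟩; exact ⟨a, ha, rfl⟩
    · rintro ⟨a, ha, rfl⟩; exact ⟨a, ha, rfl⟩
  have h2 : (fun a : Idx.{u} => (seqF p a).1) '' {a : Idx.{u} | b.1 ≤ a.1} ⊆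
      closure (seqF p b).2 := by
    rintro z ⟨a, ha, rfl⟩
    rcases lt_trichotomy b.1 a.1 with h | h | h
    · exact (good_all p hiso hnd a).2.2.2.2.1 b h
    · have hab : b = a := Subtype.ext h
      rw [← hab]
      exact subset_closure hxV
    · exact absurd h (not_lt.2 ha)
  apply Set.eq_empty_iff_forall_notMem.2
  rintro z ⟨hz1, hz2⟩
  have hz2' : z ∈ closure (seqF p b).2 := by
    have := closure_mono h2 hz2
    rwa [closure_closure] at this
  rw [h1] at hz1
  exact Set.notMem_empty z (hfree ▸ Set.mem_inter hz2' hz1)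

theorem mk_idx : Cardinal.mk Idx.{u} = Cardinal.aleph 1 := by
  have h2 : Cardinal.mk Idx.{u} = Cardinal.mk ↥(Set.Iio (Cardinal.aleph 1).ord) :=
    Cardinal.mk_congr (Equiv.subtypeEquivRight (fun o => Iff.rfl))
  rw [h2, Ordinal.mk_Iio_ordinal, Cardinal.card_ord, Cardinal.lift_aleph, Ordinal.lift_one]

theorem mk_initial_lt (b : Idx.{u}) :
    Cardinal.mk {a : Idx.{u} // a.1 < b.1} < Cardinal.aleph 1 := by
  haveI : Countable ↥{a : Idx.{u} | a.1 < b.1} := Set.countable_coe_iff.2 (countable_initialSeg b)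
  exact lt_of_le_of_lt (Cardinal.mk_le_aleph0_iff.2 this) Cardinal.aleph0_lt_aleph_one

theorem tail_nonempty (p : K) (W : Set K) (b : Idx.{u})
    (hW : ¬(Cardinal.mk {a : Idx.{u} // (seqF p a).1 ∈ W} < Cardinal.aleph 1)) :
    ∃ a : Idx.{u}, b.1 ≤ a.1 ∧ (seqF p a).1 ∈ W := by
  by_contra h
  push_neg at h
  have hmono : Cardinal.mk {a : Idx.{u} // (seqF p a).1 ∈ W} ≤
      Cardinal.mk {a : Idx.{u} // a.1 < b.1} := by
    refine Cardinal.mk_subtype_mono (fun a ha => ?_)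
    by_contra hnl
    exact h a (not_lt.1 hnl) ha
  exact hW (lt_of_le_of_lt hmono (mk_initial_lt b))

theorem noacc (p : K) (hct : CountablyTight ↥({p}ᶜ : Set K))
    (hiso : ¬ IsOpen ({p} : Set K))
    (hnd : ∀ D : Set K, D.Countable → IsDiscreteSubset D → p ∉ closure D)
    (q : K) (hq : q ≠ p)
    (h : ∀ b : Idx.{u}, q ∈ closure ((fun a : Idx.{u} => (seqF p a).1) '' {a : Idx.{u} | b.1 ≤ a.1})) :
    False := by
  classical
  have hidx0 : (0 : Ordinal) < (Cardinal.aleph 1).ord := by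
    rw [Cardinal.lt_ord]
    simp only [Ordinal.card_zero]
    exact lt_trans Cardinal.aleph0_pos Cardinal.aleph0_lt_aleph_one
  have hq0 := h ⟨0, hidx0⟩
  have huniv : {a : Idx.{u} | (⟨0, hidx0⟩ : Idx.{u}).1 ≤ a.1} = Set.univ :=
    Set.eq_univ_of_forall fun a => zero_le (a := a.1)
  rw [huniv] at hq0
  have hS : (fun a : Idx.{u} => (seqF p a).1) '' Set.univ ⊆ {p}ᶜ := by
    rintro z ⟨a, _, rfl⟩
    exact (good_all p hiso hnd a).2.2.2.1
  have hqmem : q ∈ ({p}ᶜ : Set K) := hq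
  set S' : Set ↥({p}ᶜ : Set K) :=
    Subtype.val ⁻¹' ((fun a : Idx.{u} => (seqF p a).1) '' Set.univ) with hS'
  have him : Subtype.val '' S' = (fun a : Idx.{u} => (seqF p a).1) '' Set.univ := by
    rw [hS', Subtype.image_preimage_coe]
    exact Set.inter_eq_self_of_subset_right hS
  have hq' : (⟨q, hqmem⟩ : ↥({p}ᶜ : Set K)) ∈ closure S' := by
    rw [closure_subtype, him]
    exact hq0
  obtain ⟨C', hC'S, hC'c, hqC'⟩ := hct S' ⟨q, hqmem⟩ hq'
  set Cc : Set K := Subtype.val '' C' with hCc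
  have hqCc : q ∈ closure Cc := by
    have := hqC'
    rw [closure_subtype] at this
    exact this
  have hCcS : Cc ⊆ (fun a : Idx.{u} => (seqF p a).1) '' Set.univ := by
    rintro z ⟨w, hw, rfl⟩
    exact hC'S hw
  have hsel : ∀ z : ↥Cc, ∃ a : Idx.{u}, (seqF p a).1 = z.1 := by
    rintro ⟨z, hz⟩
    obtain ⟨a, _, ha⟩ := hCcS hz
    exact ⟨a, ha⟩
  choose idx hidx using hsel
  haveI hCcCount : Countable ↥Cc := (hC'c.image _).to_subtype
  have hγlt : (⨆ z : ↥Cc, Order.succ (idx z).1) < (Cardinal.aleph 1).ord := by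
    apply Ordinal.iSup_lt_ord_lift
    · rw [Cardinal.IsRegular.cof_eq Cardinal.isRegular_aleph_one]
      refine lt_of_le_of_lt ?_ Cardinal.aleph0_lt_aleph_one
      have hlift : Cardinal.lift.{u} (Cardinal.mk ↥Cc) ≤ Cardinal.lift.{u} Cardinal.aleph0 :=
        Cardinal.lift_le.2 (Cardinal.mk_le_aleph0_iff.2 hCcCount)
      rwa [Cardinal.lift_aleph0] at hlift
    · intro z
      exact (Cardinal.isSuccLimit_ord (Cardinal.aleph0_le_aleph 1)).succ_lt (idx z).2
  set b : Idx.{u} := ⟨_, hγlt⟩ with hb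
  have hsub : Cc ⊆ (fun a : Idx.{u} => (seqF p a).1) '' {a : Idx.{u} | a.1 < b.1} := by
    intro z hz
    refine ⟨idx ⟨z, hz⟩, ?_, hidx ⟨z, hz⟩⟩
    calc (idx ⟨z, hz⟩).1 < Order.succ (idx ⟨z, hz⟩).1 := Order.lt_succ _
      _ ≤ ⨆ z : ↥Cc, Order.succ (idx z).1 :=
          Ordinal.le_iSup (fun z : ↥Cc => Order.succ (idx z).1) ⟨z, hz⟩
  have h1 : q ∈ closure ((fun a : Idx.{u} => (seqF p a).1) '' {a : Idx.{u} | a.1 < b.1}) :=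
    closure_mono hsub hqCc
  exact Set.notMem_empty q (free_at p hiso hnd b ▸ Set.mem_inter h1 (h b))

theorem aux_card {ι : Type} (t : Finset ι) (A : ι → Set Idx.{u})
    (h : ∀ i ∈ t, Cardinal.mk ↥(A i) < Cardinal.aleph 1) :
    Cardinal.mk ↥(⋃ i ∈ t, A i) < Cardinal.aleph 1 := by
  classical
  induction t using Finset.induction with
  | empty =>
    rw [show (⋃ i ∈ (∅ : Finset ι), A i) = (∅ : Set Idx.{u}) by simp]
    rw [Cardinal.mk_emptyCollection]
    exact lt_trans Cardinal.aleph0_pos Cardinal.aleph0_lt_aleph_one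
  | @insert i t hi IH =>
    rw [show (⋃ j ∈ insert i t, A j) = A i ∪ ⋃ j ∈ t, A j by simp]
    refine lt_of_le_of_lt (Cardinal.mk_union_le _ _) ?_
    exact Cardinal.add_lt_of_lt (Cardinal.aleph0_le_aleph 1)
      (h i (Finset.mem_insert_self i t)) (IH fun j hj => h j (Finset.mem_insert_of_mem hj))

theorem acc_at_p (p : K) (hct : CountablyTight ↥({p}ᶜ : Set K))
    (hiso : ¬ IsOpen ({p} : Set K))
    (hnd : ∀ D : Set K, D.Countable → IsDiscreteSubset D → p ∉ closure D)
    (U : Set K) (hU : IsOpen U) (hpU : p ∈ U) :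
    ¬(Cardinal.mk {a : Idx.{u} // (seqF p a).1 ∈ U} < Cardinal.aleph 1) := by
  classical
  intro hlt
  have hcov : ∀ z ∈ Uᶜ, ∃ W : Set K, IsOpen W ∧ z ∈ W ∧
      Cardinal.mk {a : Idx.{u} // (seqF p a).1 ∈ W} < Cardinal.aleph 1 := by
    by_contra h
    push_neg at h
    obtain ⟨z, hzF, hzW⟩ := h
    have hzp : z ≠ p := fun hzp => hzF (hzp ▸ hpU)
    apply noacc p hct hiso hnd z hzp
    intro b
    rw [mem_closure_iff]
    intro W hWo hzW'
    obtain ⟨a, hab, haW⟩ := tail_nonempty p W b (not_lt.2 (hzW W hWo hzW'))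
    exact ⟨(seqF p a).1, haW, Set.mem_image_of_mem _ hab⟩
  choose W hWo hWz hWc using hcov
  have hcpt : IsCompact (Uᶜ : Set K) := hU.isClosed_compl.isCompact
  obtain ⟨t, ht⟩ := hcpt.elim_finite_subcover (fun z : ↥(Uᶜ : Set K) => W z.1 z.2)
    (fun z => hWo z.1 z.2)
    (fun z hz => Set.mem_iUnion.2 ⟨⟨z, hz⟩, hWz z hz⟩)
  have hsub : {a : Idx.{u} | (seqF p a).1 ∈ Uᶜ} ⊆
      ⋃ i ∈ t, {a : Idx.{u} | (seqF p a).1 ∈ W i.1 i.2} := by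
    intro a ha
    rcases Set.mem_iUnion₂.1 (ht ha) with ⟨i, hit, hi⟩
    exact Set.mem_iUnion₂.2 ⟨i, hit, hi⟩
  have hcompl : Cardinal.mk ↥{a : Idx.{u} | (seqF p a).1 ∈ Uᶜ} < Cardinal.aleph 1 :=
    lt_of_le_of_lt (Cardinal.mk_le_mk_of_subset hsub)
      (aux_card t _ (fun i _ => hWc i.1 i.2))
  have htotal := Cardinal.mk_sum_compl ({a : Idx.{u} | (seqF p a).1 ∈ U})
  rw [mk_idx] at htotal
  have hcompl' : Cardinal.mk ↥({a : Idx.{u} | (seqF p a).1 ∈ U}ᶜ) < Cardinal.aleph 1 := by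
    have heq : ({a : Idx.{u} | (seqF p a).1 ∈ U}ᶜ) = {a : Idx.{u} | (seqF p a).1 ∈ Uᶜ} := by
      ext a
      simp [Set.mem_compl_iff]
    rw [heq]
    exact hcompl
  have hfin : (Cardinal.aleph 1 : Cardinal.{u + 1}) < Cardinal.aleph 1 := by
    calc (Cardinal.aleph 1 : Cardinal.{u + 1})
        = Cardinal.mk ↥{a : Idx.{u} | (seqF p a).1 ∈ U} +
          Cardinal.mk ↥({a : Idx.{u} | (seqF p a).1 ∈ U}ᶜ) := htotal.symm
      _ < Cardinal.aleph 1 :=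
          Cardinal.add_lt_of_lt (Cardinal.aleph0_le_aleph 1) hlt hcompl'
  exact lt_irrefl _ hfin

end

/-- A free ω₁-sequence whose only complete accumulation point is `p`. Under the same
hypotheses as before: `K` compact Hausdorff, `K \ {p}` countably tight, `p` not isolated
and not in the closure of any countable discrete set. A point `q` is a complete
accumulation point of the sequence if every open neighborhood of `q` contains ℵ₁-many
terms of the sequence. -/
theorem statement1 {K : Type} [TopologicalSpace K] [CompactSpace K] [T2Space K] (p : K)
    (hct : CountablyTight ↥({p}ᶜ : Set K))
    (hiso : ¬ IsOpen ({p} : Set K))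
    (hnd : ∀ D : Set K, D.Countable → IsDiscreteSubset D → p ∉ closure D) :
    ∃ x : {o : Ordinal // o < (Cardinal.aleph 1).ord} → K,
      (∀ β : Ordinal, β < (Cardinal.aleph 1).ord →
        closure (x '' {a | a.1 < β}) ∩ closure (x '' {a | β ≤ a.1}) = ∅) ∧
      ∀ q : K,
        ((∀ U : Set K, IsOpen U → q ∈ U →
            Cardinal.mk {a : {o : Ordinal // o < (Cardinal.aleph 1).ord} // x a ∈ U} =
              Cardinal.aleph 1) ↔ q = p) := by
  classical
  refine ⟨fun a => (seqF p a).1, ?_, ?_⟩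
  · intro β hβ
    exact free_at p hiso hnd ⟨β, hβ⟩
  · intro q
    constructor
    · intro hacc
      by_contra hq
      apply noacc p hct hiso hnd q hq
      intro b
      rw [mem_closure_iff]
      intro W hWo hqW
      have hW : ¬(Cardinal.mk {a : Idx // (seqF p a).1 ∈ W} < Cardinal.aleph 1) := by
        rw [hacc W hWo hqW]
        exact lt_irrefl _
      obtain ⟨a, hab, haW⟩ := tail_nonempty p W b hW
      exact ⟨(seqF p a).1, haW, Set.mem_image_of_mem _ hab⟩
    · intro hqp
      intro U hU hpU
      rw [hqp] at hpU
      have h1 := acc_at_p p hct hiso hnd U hU hpU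
      have h2 : Cardinal.mk {a : Idx // (seqF p a).1 ∈ U} ≤ Cardinal.aleph 1 := by
        rw [← mk_idx]
        exact Cardinal.mk_subtype_le _
      exact le_antisymm h2 (not_lt.1 h1)
end

section
/- Let κ < 𝔡 be a cardinal, and for each α < κ let E_α be an infinite subset of ω and f_α : E_α → ω a function. Then there exists f : ω → ω such that for every α < κ, the set {n ∈ E_α : f_α(n) < f(n)} is infinite. -/
open Set Topology

/-- The dominating number 𝔡 : the least cardinality of a family G ⊆ ω^ω such that
every f ∈ ω^ω is eventually dominated by some member of G. -/
noncomputable def dominatingNumber : Cardinal :=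
  sInf { c | ∃ G : Set (ℕ → ℕ), Cardinal.mk G = c ∧
    ∀ f : ℕ → ℕ, ∃ g ∈ G, {n : ℕ | g n < f n}.Finite }

/-- van Douwen's characterization of 𝔡: if κ < 𝔡 and for each α < κ we have an
infinite set `E α ⊆ ω` and a function `f α : E α → ω`, then there is a single
`f : ω → ω` which strictly dominates each `f α` on infinitely many points of `E α`. -/
theorem statement6 {ι : Type} (hκ : Cardinal.mk ι < dominatingNumber)
    (E : ι → Set ℕ) (hE : ∀ i, (E i).Infinite) (g : ι → ℕ → ℕ) :
    ∃ f : ℕ → ℕ, ∀ i : ι, {n ∈ E i | g i n < f n}.Infinite := by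
  classical
  set e : ι → ℕ → ℕ := fun i => Nat.nth (· ∈ E i) with he
  have he_mem : ∀ i n, e i n ∈ E i := fun i n => Nat.nth_mem_of_infinite (hE i) n
  have he_mono : ∀ i, StrictMono (e i) := fun i => Nat.nth_strictMono (hE i)
  set h : ι → ℕ → ℕ := fun i n => (Finset.range (n+1)).sup (fun k => g i (e i k)) with hh
  -- there is f infinitely often dominating each h i
  have key : ∃ f : ℕ → ℕ, ∀ i, {n : ℕ | h i n < f n}.Infinite := by
    by_contra hcon
    push_neg at hcon
    have : dominatingNumber ≤ Cardinal.mk ι := by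
      refine le_trans (csInf_le' ?_) (Cardinal.mk_range_le (f := h))
      refine ⟨Set.range h, rfl, fun f => ?_⟩
      obtain ⟨i, hi⟩ := hcon f
      exact ⟨h i, Set.mem_range_self i, hi⟩
    exact absurd hκ (not_lt.mpr this)
  obtain ⟨f, hf⟩ := key
  refine ⟨fun n => (Finset.range (n+1)).sup f, fun i => ?_⟩
  have hsub : (e i '' {n : ℕ | h i n < f n}) ⊆ {n ∈ E i | g i n < (Finset.range (n+1)).sup f} := by
    rintro _ ⟨n, hn, rfl⟩
    refine ⟨he_mem i n, ?_⟩
    have h1 : g i (e i n) ≤ h i n :=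
      Finset.le_sup (f := fun k => g i (e i k)) (Finset.mem_range.mpr (Nat.lt_succ_self n))
    have h2 : f n ≤ (Finset.range (e i n + 1)).sup f :=
      Finset.le_sup (Finset.mem_range.mpr (Nat.lt_succ_of_le ((he_mono i).le_apply)))
    exact lt_of_le_of_lt h1 (lt_of_lt_of_le hn h2)
  exact Set.Infinite.mono hsub (((hf i).image (Set.injOn_of_injective (he_mono i).injective)))
end

section
/- Let X be a countable regular space and κ an uncountable cardinal with uncountable cofinality. Then the set of points x ∈ X with π-character less than κ is closed in X. -/
/-!
If every point of `A` has a local π-base of size `< κ`, the union of these π-bases is a local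
π-base at every point of the closure of `A`: a neighbourhood of a point of `cl A` is a
neighbourhood of some `a ∈ A`, hence contains a member of the π-base chosen at `a`. When `A` is
countable and `cf κ > ω`, this union of countably many families of size `< κ` still has size `< κ`.
-/

open Set Topology

/-- The π-character of a point: the least cardinality of a local π-base at the point. -/
noncomputable def piCharacter {X : Type*} [TopologicalSpace X] (x : X) : Cardinal :=
  sInf { c | ∃ B : Set (Set X), Cardinal.mk B = c ∧ (∀ U ∈ B, IsOpen U ∧ U.Nonempty) ∧
    ∀ V : Set X, IsOpen V → x ∈ V → ∃ U ∈ B, U ⊆ V }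

open Cardinal

universe u

theorem Cardinal.mk_iUnion_lt_of_lt_cof_ord {α ι : Type u} (f : ι → Set α) {κ : Cardinal.{u}}
    (hκ : ℵ₀ ≤ κ) (hι : #ι < κ.ord.cof) (hf : ∀ i, #(f i) < κ) : #(⋃ i, f i) < κ :=
  (mk_iUnion_le f).trans_lt <|
    mul_lt_of_lt hκ (hι.trans_le (Ordinal.cof_ord_le κ)) (iSup_lt_of_lt_cof_ord hι hf)

section PiCharacter

variable {X : Type u} [TopologicalSpace X]

def IsLocalPiBase (x : X) (B : Set (Set X)) : Prop :=
  (∀ U ∈ B, IsOpen U ∧ U.Nonempty) ∧ ∀ V : Set X, IsOpen V → x ∈ V → ∃ U ∈ B, U ⊆ V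

theorem exists_isLocalPiBase_mk_eq_piCharacter (x : X) :
    ∃ B : Set (Set X), IsLocalPiBase x B ∧ #B = piCharacter x := by
  obtain ⟨B, hmk, hB⟩ : piCharacter x ∈ { c | ∃ B : Set (Set X), #B = c ∧ IsLocalPiBase x B } :=
    csInf_mem ⟨_, {U | IsOpen U ∧ U.Nonempty}, rfl, fun _ hU => hU,
      fun V hV hxV => ⟨V, ⟨hV, x, hxV⟩, subset_rfl⟩⟩
  exact ⟨B, hB, hmk⟩

theorem IsLocalPiBase.piCharacter_le {x : X} {B : Set (Set X)} (hB : IsLocalPiBase x B) :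
    piCharacter x ≤ #B :=
  csInf_le' ⟨B, rfl, hB⟩

theorem isLocalPiBase_iUnion_of_mem_closure {ι : Type*} {a : ι → X} {B : ι → Set (Set X)}
    (hB : ∀ i, IsLocalPiBase (a i) (B i)) {x : X} (hx : x ∈ closure (range a)) :
    IsLocalPiBase x (⋃ i, B i) := by
  refine ⟨fun U hU => ?_, fun V hV hxV => ?_⟩
  · obtain ⟨i, hUi⟩ := mem_iUnion.1 hU
    exact (hB i).1 U hUi
  · obtain ⟨_, haV, i, rfl⟩ := mem_closure_iff.1 hx V hV hxV
    obtain ⟨U, hUi, hUV⟩ := (hB i).2 V hV haV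
    exact ⟨U, mem_iUnion.2 ⟨i, hUi⟩, hUV⟩

theorem piCharacter_lt_of_mem_closure {κ : Cardinal.{u}} (hκ : ℵ₀ ≤ κ) {s : Set X}
    (hs : #s < κ.ord.cof) (hsκ : ∀ a ∈ s, piCharacter a < κ) {x : X} (hx : x ∈ closure s) :
    piCharacter x < κ := by
  choose B hB hmk using fun a : s => exists_isLocalPiBase_mk_eq_piCharacter (a : X)
  have hx' : x ∈ closure (range ((↑) : s → X)) := by rwa [Subtype.range_coe]
  calc piCharacter x ≤ #(⋃ a, B a) := (isLocalPiBase_iUnion_of_mem_closure hB hx').piCharacter_le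
    _ < κ := mk_iUnion_lt_of_lt_cof_ord B hκ hs fun a => (hmk a).symm ▸ hsκ a a.2

end PiCharacter

theorem statement14_general {X : Type} [TopologicalSpace X] [Countable X]
    (κ : Cardinal)
    (hcof : Cardinal.aleph0 < κ.ord.cof) :
    IsClosed {x : X | piCharacter x < κ} :=
  isClosed_of_closure_subset fun _ hx =>
    piCharacter_lt_of_mem_closure (hcof.le.trans (Ordinal.cof_ord_le κ))
      (mk_le_aleph0.trans_lt hcof) (fun _ ha => ha) hx

/-- In a countable regular space, for an uncountable cardinal κ of uncountable
cofinality, the set of points of π-character less than κ is closed. -/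
theorem statement14 {X : Type} [TopologicalSpace X] [T3Space X] [Countable X]
    (κ : Cardinal) (hκ : Cardinal.aleph0 < κ)
    (hcof : Cardinal.aleph0 < κ.ord.cof) :
    IsClosed {x : X | piCharacter x < κ} :=
  statement14_general κ hcof
end

section
/- Let X be a normal space written as a topological sum X = ⊕_{n<ω} X_n. For each n, let G_n be an (n+1)-linked collection of closed subsets of X_n which is far in X_n (every closed discrete subset of X_n is disjoint from some member of G_n). Then the collection G = { ⋃_n G_n : G_n ∈ G_n for each n } of closed subsets of X has the finite intersection property and is far in X, and hence any point of ⋂{ cl_{βX}(G) : G ∈ G } is a far point of X. -/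
/-!
Closedness and farness of the unions `⋃ₙ gₙ` are checked summand by summand, since a closed
discrete subset of `⊕ₙ Xₙ` meets each `Xₙ` in a closed discrete set. For the finite
intersection property, `k` unions meet already in the summand `X_{k-1}`, where their
`k` components intersect because `G_{k-1}` is `k`-linked. A point of `βX` in the closure of
every member of a far family of closed sets is then a far point: in a normal space disjoint
closed sets have disjoint closures in `βX`.
-/

open Set Topology

namespace IsDiscreteSubset

variable {X Y : Type*} [TopologicalSpace X] [TopologicalSpace Y]

lemma singleton (x : X) : IsDiscreteSubset ({x} : Set X) := by
  rintro y rfl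
  exact ⟨univ, isOpen_univ, mem_univ y, univ_inter _⟩

lemma preimage {f : X → Y} (hf : Continuous f) (hinj : Function.Injective f) {D : Set Y}
    (hD : IsDiscreteSubset D) : IsDiscreteSubset (f ⁻¹' D) := by
  intro x hx
  obtain ⟨U, hU, hxU, hUD⟩ := hD (f x) hx
  refine ⟨f ⁻¹' U, hU.preimage hf, hxU, ?_⟩
  rw [← preimage_inter, hUD, ← image_singleton, hinj.preimage_image]

end IsDiscreteSubset

section StoneCech

variable {X : Type*} [TopologicalSpace X]

lemma stoneCechExtend_mem_closure_image {γ : Type*} [TopologicalSpace γ] [CompactSpace γ]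
    [T2Space γ] {g : X → γ} (hg : Continuous g) {S : Set X} {p : StoneCech X}
    (hp : p ∈ closure (stoneCechUnit '' S)) : stoneCechExtend hg p ∈ closure (g '' S) := by
  have :=
    image_closure_subset_closure_image (continuous_stoneCechExtend hg) (mem_image_of_mem _ hp)
  simpa only [image_image, stoneCechExtend_stoneCechUnit] using this

theorem disjoint_closure_image_stoneCechUnit [NormalSpace X] {C D : Set X} (hC : IsClosed C)
    (hD : IsClosed D) (hCD : Disjoint C D) :
    Disjoint (closure (stoneCechUnit '' C)) (closure (stoneCechUnit '' D)) := by
  obtain ⟨f, hf0, hf1, hfI⟩ := exists_continuous_zero_one_of_isClosed hC hD hCD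
  let g : X → Icc (0 : ℝ) 1 := fun x => ⟨f x, hfI x⟩
  have hg : Continuous g := f.continuous.subtype_mk hfI
  have hconst : ∀ (S : Set X) (c : Icc (0 : ℝ) 1), (∀ x ∈ S, f x = c) →
      ∀ p ∈ closure (stoneCechUnit '' S), stoneCechExtend hg p = c := fun S c hS p hp =>
    mem_singleton_iff.1 <| closure_minimal (t := {c})
      (image_subset_iff.2 fun x hx => Subtype.ext (hS x hx)) isClosed_singleton
      (stoneCechExtend_mem_closure_image hg hp)
  refine disjoint_left.2 fun p hpC hpD => ?_
  have h0 := hconst C ⟨0, left_mem_Icc.2 zero_le_one⟩ (fun x hx => hf0 hx) p hpC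
  have h1 := hconst D ⟨1, right_mem_Icc.2 zero_le_one⟩ (fun x hx => hf1 hx) p hpD
  exact zero_ne_one (congrArg Subtype.val (h0.symm.trans h1))

end StoneCech

section Far

variable {X : Type*} [TopologicalSpace X]

def IsFar (𝒢 : Set (Set X)) : Prop :=
  ∀ D : Set X, IsClosed D → IsDiscreteSubset D → ∃ A ∈ 𝒢, D ∩ A = ∅

def IsFarPoint (p : StoneCech X) : Prop :=
  p ∉ range (stoneCechUnit : X → StoneCech X) ∧
    ∀ D : Set X, IsClosed D → IsDiscreteSubset D → p ∉ closure (stoneCechUnit '' D)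

theorem IsFar.isFarPoint_of_forall_mem_closure [NormalSpace X] [T1Space X] {𝒢 : Set (Set X)}
    (hfar : IsFar 𝒢) (hclosed : ∀ A ∈ 𝒢, IsClosed A) {p : StoneCech X}
    (hp : ∀ A ∈ 𝒢, p ∈ closure (stoneCechUnit '' A)) : IsFarPoint p := by
  have hD (D : Set X) (hDc : IsClosed D) (hDd : IsDiscreteSubset D) :
      p ∉ closure (stoneCechUnit '' D) := by
    obtain ⟨A, hA𝒢, hDA⟩ := hfar D hDc hDd
    exact disjoint_left.1 (disjoint_closure_image_stoneCechUnit (hclosed A hA𝒢) hDc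
      (disjoint_iff_inter_eq_empty.2 hDA).symm) (hp A hA𝒢)
  refine ⟨?_, hD⟩
  rintro ⟨x, rfl⟩
  exact hD {x} isClosed_singleton (.singleton x) (subset_closure (mem_image_of_mem _ rfl))

end Far

section Sigma

variable {ι : Type*} {Z : ι → Type*}

lemma iUnion_image_sigmaMk (g : ∀ i, Set (Z i)) : ⋃ i, Sigma.mk i '' g i = univ.sigma g := by
  simp [sigma_eq_biUnion]

def sigmaUnions (G : ∀ i, Set (Set (Z i))) : Set (Set (Σ i, Z i)) :=
  {A | ∃ g : ∀ i, Set (Z i), (∀ i, g i ∈ G i) ∧ A = ⋃ i, Sigma.mk i '' g i}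

variable [∀ i, TopologicalSpace (Z i)] {G : ∀ i, Set (Set (Z i))}

lemma isClosed_of_mem_sigmaUnions (hclosed : ∀ i, ∀ g ∈ G i, IsClosed g) {A : Set (Σ i, Z i)}
    (hA : A ∈ sigmaUnions G) : IsClosed A := by
  obtain ⟨g, hg, rfl⟩ := hA
  rw [iUnion_image_sigmaMk, isClosed_sigma_iff]
  intro i
  rw [mk_preimage_sigma (mem_univ i)]
  exact hclosed i _ (hg i)

lemma isFar_sigmaUnions (hfar : ∀ i, IsFar (G i)) : IsFar (sigmaUnions G) := by
  intro D hDc hDd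
  choose g hg hdisj using fun i => hfar i (Sigma.mk i ⁻¹' D)
    (hDc.preimage continuous_sigmaMk) (hDd.preimage continuous_sigmaMk sigma_mk_injective)
  refine ⟨_, ⟨g, hg, rfl⟩, ?_⟩
  rw [iUnion_image_sigmaMk, eq_empty_iff_forall_notMem]
  rintro ⟨i, x⟩ ⟨hxD, -, hxg⟩
  exact (hdisj i).subset ⟨hxD, hxg⟩

end Sigma

theorem sInter_nonempty_of_subset_sigmaUnions {Z : ℕ → Type*} {G : ∀ n, Set (Set (Z n))}
    (hlinked : ∀ n (S : Finset (Set (Z n))), ↑S ⊆ G n → S.Nonempty → S.card ≤ n + 1 →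
      (⋂₀ (S : Set (Set (Z n)))).Nonempty)
    {S : Finset (Set (Σ n, Z n))} (hS : ↑S ⊆ sigmaUnions G) (hne : S.Nonempty) :
    (⋂₀ (S : Set (Set (Σ n, Z n)))).Nonempty := by
  classical
  choose! g hg hgA using fun A (hA : A ∈ S) => hS hA
  set n := S.card - 1
  have hcard : (S.image fun A => g A n).card ≤ n + 1 :=
    Finset.card_image_le.trans (by have := hne.card_pos; omega)
  obtain ⟨x, hx⟩ := hlinked n (S.image fun A => g A n)
    (by rw [Finset.coe_image, image_subset_iff]; exact fun A hA => hg A hA n)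
    (hne.image _) hcard
  refine ⟨⟨n, x⟩, fun A hA => ?_⟩
  rw [hgA A hA, iUnion_image_sigmaMk]
  exact ⟨mem_univ n, hx _ (Finset.mem_coe.2 (Finset.mem_image_of_mem _ hA))⟩

/-- Combination scheme for far collections on a topological sum `X = ⊕_n X_n` of a
normal (T₄) space: if each `G n` is an (n+1)-linked far collection of closed subsets of
`X n`, then the collection of unions `⋃_n g n` (with `g n ∈ G n`) consists of closed
sets, has the finite intersection property, is far in `X`, and any point of `βX` in the
closure of all its members is a far point of `X`. -/
theorem statement15 {Z : ℕ → Type} [∀ n, TopologicalSpace (Z n)]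
    [NormalSpace (Σ n, Z n)] [T1Space (Σ n, Z n)]
    (G : ∀ n : ℕ, Set (Set (Z n)))
    (hclosed : ∀ n, ∀ g ∈ G n, IsClosed g)
    (hlinked : ∀ n (S : Finset (Set (Z n))), ↑S ⊆ G n → S.Nonempty → S.card ≤ n + 1 →
      (⋂₀ (S : Set (Set (Z n)))).Nonempty)
    (hfar : ∀ n (D : Set (Z n)), IsClosed D → IsDiscreteSubset D →
      ∃ g ∈ G n, D ∩ g = ∅) :
    (∀ A ∈ {A : Set (Σ n, Z n) | ∃ g : ∀ n, Set (Z n),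
        (∀ n, g n ∈ G n) ∧ A = ⋃ n, Sigma.mk n '' g n}, IsClosed A) ∧
    (∀ S : Finset (Set (Σ n, Z n)),
      ↑S ⊆ {A : Set (Σ n, Z n) | ∃ g : ∀ n, Set (Z n),
        (∀ n, g n ∈ G n) ∧ A = ⋃ n, Sigma.mk n '' g n} →
      S.Nonempty → (⋂₀ (S : Set (Set (Σ n, Z n)))).Nonempty) ∧
    (∀ D : Set (Σ n, Z n), IsClosed D → IsDiscreteSubset D →
      ∃ A ∈ {A : Set (Σ n, Z n) | ∃ g : ∀ n, Set (Z n),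
        (∀ n, g n ∈ G n) ∧ A = ⋃ n, Sigma.mk n '' g n}, D ∩ A = ∅) ∧
    (∀ p : StoneCech (Σ n, Z n),
      (∀ A ∈ {A : Set (Σ n, Z n) | ∃ g : ∀ n, Set (Z n),
        (∀ n, g n ∈ G n) ∧ A = ⋃ n, Sigma.mk n '' g n},
          p ∈ closure (stoneCechUnit '' A)) →
      p ∉ Set.range (stoneCechUnit : (Σ n, Z n) → StoneCech (Σ n, Z n)) ∧
        ∀ D : Set (Σ n, Z n), IsClosed D → IsDiscreteSubset D →
          p ∉ closure (stoneCechUnit '' D)) := by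
  have hclosed' : ∀ A ∈ sigmaUnions G, IsClosed A :=
    fun _ => isClosed_of_mem_sigmaUnions hclosed
  have hfar' : IsFar (sigmaUnions G) := isFar_sigmaUnions hfar
  exact ⟨hclosed', fun _ => sInter_nonempty_of_subset_sigmaUnions hlinked, hfar',
    fun _ hp => hfar'.isFarPoint_of_forall_mem_closure hclosed' hp⟩
end

section
/- Let X be a countable regular space of π-weight κ, where κ has uncountable cofinality. Then there is β < κ and a non-empty open U ⊆ X such that every point of U has π-character exactly κ. -/
/-!
Let `A` be the set of points of π-character `< κ`. Gluing local π-bases at the points of a dense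
set gives a π-base, so if `A` were dense then `κ = πw(X) ≤ ∑_{x ∈ A} πχ(x)`; but `A` is countable
and `cf κ > ω`, so this sum is `< κ`. Hence `U := X \ cl A` is non-empty, and every point of `U`
has π-character `≥ κ`, while π-character never exceeds π-weight.
-/

open Set Topology

/-- The π-weight of a space: the least cardinality of a π-base, i.e. a family of
nonempty open sets such that every nonempty open set contains a member. -/
noncomputable def piWeight (X : Type*) [TopologicalSpace X] : Cardinal :=
  sInf { c | ∃ B : Set (Set X), Cardinal.mk B = c ∧ (∀ U ∈ B, IsOpen U ∧ U.Nonempty) ∧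
    ∀ V : Set X, IsOpen V → V.Nonempty → ∃ U ∈ B, U ⊆ V }

open Cardinal

theorem Cardinal.sum_lt_of_lt_cof_ord {ι : Type*} {f : ι → Cardinal} {c : Cardinal}
    (hc : ℵ₀ ≤ c) (hι : #ι < c.ord.cof) (hf : ∀ i, f i < c) : sum f < c :=
  (sum_le_mk_mul_iSup f).trans_lt <|
    mul_lt_of_lt hc (hι.trans_le (Ordinal.cof_ord_le c)) (iSup_lt_of_lt_cof_ord hι hf)

section PiCharacter

variable {X : Type*} [TopologicalSpace X]

theorem exists_localPiBase_card_eq_piCharacter (x : X) :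
    ∃ B : Set (Set X), #B = piCharacter x ∧ (∀ U ∈ B, IsOpen U ∧ U.Nonempty) ∧
      ∀ V : Set X, IsOpen V → x ∈ V → ∃ U ∈ B, U ⊆ V :=
  csInf_mem (s := {c | ∃ B : Set (Set X), #B = c ∧ _}) ⟨_, {V | IsOpen V ∧ V.Nonempty}, rfl,
    fun _ h => h, fun V hV hx => ⟨V, ⟨hV, ⟨x, hx⟩⟩, subset_rfl⟩⟩

theorem piCharacter_le_piWeight (x : X) : piCharacter x ≤ piWeight X := by
  refine le_csInf ⟨_, {V | IsOpen V ∧ V.Nonempty}, rfl, fun _ h => h,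
    fun V hV hne => ⟨V, ⟨hV, hne⟩, subset_rfl⟩⟩ ?_
  rintro c ⟨B, rfl, hB, hbase⟩
  exact csInf_le' ⟨B, rfl, hB, fun V hV hx => hbase V hV ⟨x, hx⟩⟩

theorem piWeight_le_sum_piCharacter {D : Set X} (hD : Dense D) :
    piWeight X ≤ sum fun x : D => piCharacter x.1 := by
  choose B hcard hB hbase using fun x : D => exists_localPiBase_card_eq_piCharacter x.1
  have hπ : ∀ V : Set X, IsOpen V → V.Nonempty → ∃ U ∈ ⋃ x, B x, U ⊆ V := by
    intro V hV hne
    obtain ⟨x, hxV, hxD⟩ := hD.inter_open_nonempty V hV hne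
    obtain ⟨U, hU, hUV⟩ := hbase ⟨x, hxD⟩ V hV hxV
    exact ⟨U, mem_iUnion.2 ⟨_, hU⟩, hUV⟩
  have hopen : ∀ U ∈ ⋃ x, B x, IsOpen U ∧ U.Nonempty := by
    intro U hU
    obtain ⟨x, hx⟩ := mem_iUnion.1 hU
    exact hB x U hx
  calc piWeight X ≤ #(⋃ x, B x) := csInf_le' ⟨_, rfl, hopen, hπ⟩
    _ ≤ sum fun x => #(B x) := mk_iUnion_le_sum_mk
    _ = sum fun x : D => piCharacter x.1 := by simp only [hcard]

end PiCharacter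

theorem statement18_general {X : Type} [TopologicalSpace X] [Countable X]
    (κ : Cardinal) (hw : piWeight X = κ)
    (hcof : Cardinal.aleph0 < κ.ord.cof) :
    ∃ β : Cardinal, β < κ ∧ ∃ U : Set X, IsOpen U ∧ U.Nonempty ∧
      ∀ x ∈ U, piCharacter x = κ := by
  set A : Set X := {x | piCharacter x < κ}
  have hsum_lt : (sum fun x : A => piCharacter x.1) < κ :=
    sum_lt_of_lt_cof_ord (hcof.le.trans (Ordinal.cof_ord_le κ))
      (mk_le_aleph0.trans_lt hcof) fun x => x.2
  have hA : ¬Dense A := fun hA => ((hw ▸ piWeight_le_sum_piCharacter hA).trans_lt hsum_lt).false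
  refine ⟨_, hsum_lt, (closure A)ᶜ, isClosed_closure.isOpen_compl, ?_, fun x hx => ?_⟩
  · rwa [nonempty_compl, Ne, ← dense_iff_closure_eq]
  · exact (hw ▸ piCharacter_le_piWeight x).antisymm
      (not_lt.1 fun h => hx (subset_closure h))

/-- If `X` is countable regular of π-weight κ with cf(κ) > ω, then there are β < κ and
a nonempty open `U ⊆ X` all of whose points have π-character exactly κ. -/
theorem statement18 {X : Type} [TopologicalSpace X] [T3Space X] [Countable X]
    (κ : Cardinal) (hw : piWeight X = κ)
    (hcof : Cardinal.aleph0 < κ.ord.cof) :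
    ∃ β : Cardinal, β < κ ∧ ∃ U : Set X, IsOpen U ∧ U.Nonempty ∧
      ∀ x ∈ U, piCharacter x = κ :=
  statement18_general κ hw hcof
end
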